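/- Let X = (X₁,…,Xₙ) have independent mean-zero components and let 𝓐 be a finite set of n×n real matrices. Then E sup_{A∈𝓐} ‖Diag(A) X‖ ≤ C · E sup_{A∈𝓐} ‖A X‖ for an absolute constant C > 0. -/

import Mathlib

/-!
Averaging over all sets `S` of coordinates decouples the off-diagonal part of a matrix:
`A - Diag(A) = (4 / 2ⁿ) ∑_S P_S A P_Sᶜ`, where `P_S = coordProj S` is the coordinate projection
onto `S`, because a pair `i ≠ j` has `i ∈ S` and `j ∉ S` for a quarter of all `S`.
For a fixed `S`, replace the coordinates of `X` in `S` by those of an independent copy `X'`. The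
resulting vector `Z` has the law of `X`, and since `X'` is centred its mean over `X'` is
`P_Sᶜ X`. Jensen's inequality gives `‖P_S A P_Sᶜ X‖ ≤ E_{X'} ‖A Z‖`, hence
`E sup_A ‖P_S A P_Sᶜ X‖ ≤ E sup_A ‖A X‖`, and the triangle inequality yields the theorem with
`C = 5`.
-/

open MeasureTheory ProbabilityTheory Real Matrix

noncomputable def euclNorm {n : ℕ} (v : Fin n → ℝ) : ℝ :=
  Real.sqrt (∑ i, (v i) ^ 2)

open Finset

theorem four_mul_card_filter_mem_and_notMem {ι : Type*} [Fintype ι] [DecidableEq ι] {i j : ι}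
    (hij : i ≠ j) : 4 * #{S : Finset ι | i ∈ S ∧ j ∉ S} = 2 ^ Fintype.card ι := by
  have hcount : #{S : Finset ι | i ∈ S ∧ j ∉ S} =
      ∏ k, ((if k = j then 0 else 1) + (if k = i then 0 else 1)) := by
    rw [prod_add, powerset_univ, card_filter]
    refine sum_congr rfl fun S _ => ?_
    simp only [← compl_eq_univ_sdiff, prod_ite_eq', mem_compl]
    by_cases hi : i ∈ S <;> by_cases hj : j ∈ S <;> simp [hi, hj]
  have hpair : ∏ k, ((if k = j then 0 else 1) + (if k = i then 0 else 1)) =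
      ∏ _k ∈ ({i, j} : Finset ι)ᶜ, 2 := by
    rw [← prod_compl_mul_prod {i, j}, prod_pair hij]
    simp only [if_neg hij, if_neg (Ne.symm hij), if_true, zero_add, add_zero, mul_one]
    refine prod_congr rfl fun k hk => ?_
    simp only [mem_compl, mem_insert, mem_singleton, not_or] at hk
    simp [hk.1, hk.2]
  rw [hcount, hpair, prod_const, ← card_compl_add_card {i, j}, card_pair hij, pow_add]
  ring

section CoordProj

variable {ι : Type*} [Fintype ι] [DecidableEq ι]

def coordProj (S : Finset ι) : Matrix ι ι ℝ :=
  diagonal fun k => if k ∈ S then 1 else 0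

theorem coordProj_mulVec_apply (S : Finset ι) (v : ι → ℝ) (k : ι) :
    (coordProj S *ᵥ v) k = if k ∈ S then v k else 0 := by
  simp [coordProj, mulVec_diagonal]

theorem coordProj_mul_mul_coordProj_compl_apply (S : Finset ι) (A : Matrix ι ι ℝ) (i j : ι) :
    (coordProj S * A * coordProj Sᶜ) i j = if i ∈ S ∧ j ∉ S then A i j else 0 := by
  by_cases hi : i ∈ S <;> by_cases hj : j ∈ S <;> simp [coordProj, hi, hj]

theorem sub_diagonal_eq_smul_sum_coordProj (A : Matrix ι ι ℝ) :
    A - diagonal (fun i => A i i) =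
      (4 / 2 ^ Fintype.card ι : ℝ) • ∑ S : Finset ι, coordProj S * A * coordProj Sᶜ := by
  ext i j
  simp only [Matrix.sub_apply, diagonal_apply, Matrix.smul_apply, Matrix.sum_apply, smul_eq_mul,
    coordProj_mul_mul_coordProj_compl_apply]
  rcases eq_or_ne i j with rfl | hij
  · simp
  · rw [if_neg hij, sub_zero, sum_ite, sum_const_zero, add_zero, sum_const, nsmul_eq_mul]
    have h := congrArg (Nat.cast (R := ℝ)) (four_mul_card_filter_mem_and_notMem hij)
    push_cast at h
    have hpos : (0 : ℝ) < #{S : Finset ι | i ∈ S ∧ j ∉ S} := by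
      exact_mod_cast card_pos.2 ⟨{i}, by simp [Ne.symm hij]⟩
    rw [← h]
    field_simp

end CoordProj

section EuclNorm

variable {n : ℕ}

theorem euclNorm_eq_norm (v : Fin n → ℝ) : euclNorm v = ‖WithLp.toLp 2 v‖ := by
  simp [EuclideanSpace.norm_eq, euclNorm, sq_abs]

theorem euclNorm_nonneg (v : Fin n → ℝ) : 0 ≤ euclNorm v :=
  Real.sqrt_nonneg _

theorem sup'_euclNorm_nonneg {α : Type*} (s : Finset α) (hs : s.Nonempty) (f : α → Fin n → ℝ) :
    0 ≤ s.sup' hs fun a => euclNorm (f a) :=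
  le_sup'_of_le _ hs.choose_spec (euclNorm_nonneg _)

theorem continuous_euclNorm : Continuous (euclNorm : (Fin n → ℝ) → ℝ) := by
  simp_rw [funext euclNorm_eq_norm]
  fun_prop

theorem euclNorm_coordProj_mulVec_le (S : Finset (Fin n)) (v : Fin n → ℝ) :
    euclNorm (coordProj S *ᵥ v) ≤ euclNorm v := by
  refine Real.sqrt_le_sqrt (sum_le_sum fun k _ => ?_)
  rw [coordProj_mulVec_apply]
  split_ifs
  · exact le_rfl
  · simpa using sq_nonneg (v k)

theorem euclNorm_diagonal_mulVec_le (A : Matrix (Fin n) (Fin n) ℝ) (x : Fin n → ℝ) :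
    euclNorm (diagonal (fun i => A i i) *ᵥ x) ≤
      euclNorm (A *ᵥ x) +
        (4 / 2 ^ n : ℝ) *
          ∑ S : Finset (Fin n), euclNorm ((coordProj S * A * coordProj Sᶜ) *ᵥ x) := by
  have hD : diagonal (fun i => A i i) *ᵥ x =
      A *ᵥ x - (4 / 2 ^ n : ℝ) • ∑ S : Finset (Fin n), (coordProj S * A * coordProj Sᶜ) *ᵥ x := by
    have h := sub_diagonal_eq_smul_sum_coordProj A
    rw [Fintype.card_fin] at h
    rw [← sum_mulVec, ← smul_mulVec, ← h, sub_mulVec, sub_sub_cancel]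
  simp only [hD, euclNorm_eq_norm, WithLp.toLp_sub, WithLp.toLp_smul, WithLp.toLp_sum]
  grw [norm_sub_le, norm_smul, norm_sum_le, Real.norm_of_nonneg (by positivity)]

end EuclNorm

section Decoupling

variable {ι : Type*} [DecidableEq ι]

theorem measurable_piecewise_prod {α : ι → Type*} [∀ i, MeasurableSpace (α i)] (S : Finset ι) :
    Measurable fun p : (∀ i, α i) × (∀ i, α i) => S.piecewise p.2 p.1 := by
  refine measurable_pi_lambda _ fun k => ?_
  by_cases hk : k ∈ S <;> simp only [piecewise_eq_of_mem, piecewise_eq_of_notMem, hk,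
    not_false_eq_true] <;> fun_prop

theorem MeasureTheory.Measure.map_piecewise_prod_pi [Fintype ι] {α : ι → Type*}
    [∀ i, MeasurableSpace (α i)]
    (ν : ∀ i, Measure (α i)) [∀ i, IsProbabilityMeasure (ν i)] (S : Finset ι) :
    ((Measure.pi ν).prod (Measure.pi ν)).map (fun p => S.piecewise p.2 p.1) = Measure.pi ν := by
  refine (Measure.pi_eq fun s hs => ?_).symm
  have hpre : (fun p : (∀ i, α i) × (∀ i, α i) => S.piecewise p.2 p.1) ⁻¹' Set.univ.pi s =
      Set.univ.pi (fun k => if k ∈ S then Set.univ else s k) ×ˢ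
        Set.univ.pi (fun k => if k ∈ S then s k else Set.univ) := by
    ext p
    simp only [Set.mem_preimage, Set.mem_prod, Set.mem_univ_pi, ← forall_and]
    refine forall_congr' fun k => ?_
    by_cases hk : k ∈ S <;> simp [hk]
  rw [Measure.map_apply (measurable_piecewise_prod S) (.univ_pi hs), hpre, Measure.prod_prod,
    Measure.pi_pi, Measure.pi_pi, ← prod_mul_distrib]
  refine prod_congr rfl fun k _ => ?_
  by_cases hk : k ∈ S <;> simp [hk]

variable [Fintype ι] {Ω β : Type*} [MeasurableSpace Ω] [MeasurableSpace β] {μ : Measure Ω}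
  [IsProbabilityMeasure μ]

theorem identDistrib_piecewise_prod {X : Ω → ι → β} (hX : ∀ i, Measurable fun ω => X ω i)
    (hind : iIndepFun (fun i ω => X ω i) μ) (S : Finset ι) :
    IdentDistrib (fun p : Ω × Ω => S.piecewise (X p.2) (X p.1)) X (μ.prod μ) μ := by
  have hXm : Measurable X := measurable_pi_lambda _ hX
  have hlaw : μ.map X = Measure.pi fun i => μ.map fun ω => X ω i :=
    hind.map_fun_eq_pi_map fun i => (hX i).aemeasurable
  refine ⟨(measurable_piecewise_prod S).comp (hXm.prodMap hXm) |>.aemeasurable,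
    hXm.aemeasurable, ?_⟩
  have _ (i : ι) : IsProbabilityMeasure (μ.map fun ω => X ω i) :=
    Measure.isProbabilityMeasure_map (hX i).aemeasurable
  have hpi := Measure.map_piecewise_prod_pi (fun i => μ.map fun ω => X ω i) S
  rw [← hlaw] at hpi
  rw [← hpi, Measure.map_prod_map _ _ hXm hXm, Measure.map_map (measurable_piecewise_prod S)
    (hXm.prodMap hXm)]
  rfl

end Decoupling

section Jensen

variable {Ω : Type*} [MeasurableSpace Ω] {μ : Measure Ω}

theorem euclNorm_integral_le {n : ℕ} (Y : Ω → Fin n → ℝ) :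
    euclNorm (∫ ω, Y ω ∂μ) ≤ ∫ ω, euclNorm (Y ω) ∂μ := by
  have h : WithLp.toLp 2 (∫ ω, Y ω ∂μ) = ∫ ω, WithLp.toLp 2 (Y ω) ∂μ :=
    ((PiLp.continuousLinearEquiv 2 ℝ fun _ : Fin n => ℝ).symm.integral_comp_comm Y).symm
  simp only [euclNorm_eq_norm, h]
  exact norm_integral_le_integral_norm _

theorem mulVec_integral {m ι : Type*} [Fintype m] [Fintype ι] (M : Matrix m ι ℝ)
    {Y : Ω → ι → ℝ} (hY : Integrable Y μ) :
    M *ᵥ ∫ ω, Y ω ∂μ = ∫ ω, M *ᵥ Y ω ∂μ :=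
  (M.mulVecLin.toContinuousLinearMap.integral_comp_comm hY).symm

end Jensen

section Comparison

variable {n : ℕ} {Ω : Type*} [MeasurableSpace Ω] {μ : Measure Ω} [IsProbabilityMeasure μ]
  {X : Ω → Fin n → ℝ} {S : Finset (Fin n)}

theorem continuous_sup'_euclNorm_mulVec {ι : Type*} (𝓐 : Finset ι) (h𝓐 : 𝓐.Nonempty)
    (M : ι → Matrix (Fin n) (Fin n) ℝ) :
    Continuous fun y => 𝓐.sup' h𝓐 fun A => euclNorm (M A *ᵥ y) :=
  Continuous.finset_sup'_apply h𝓐 fun _ _ =>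
    continuous_euclNorm.comp (continuous_const.matrix_mulVec continuous_id)

theorem euclNorm_coordProj_mul_mul_coordProj_compl_mulVec_le
    (hX : ∀ i ∈ S, Integrable (fun ω => X ω i) μ ∧ ∫ ω, X ω i ∂μ = 0)
    (A : Matrix (Fin n) (Fin n) ℝ) (x : Fin n → ℝ) :
    euclNorm ((coordProj S * A * coordProj Sᶜ) *ᵥ x) ≤
      ∫ ω, euclNorm (A *ᵥ S.piecewise (X ω) x) ∂μ := by
  have hY : Integrable (fun ω => S.piecewise (X ω) x) μ := by
    refine integrable_pi_iff.2 fun k => ?_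
    by_cases hk : k ∈ S
    · simpa [hk] using (hX k hk).1
    · simp [hk]
  have hmean : ∫ ω, S.piecewise (X ω) x ∂μ = coordProj Sᶜ *ᵥ x := by
    ext k
    rw [eval_integral (integrable_pi_iff.1 hY), coordProj_mulVec_apply]
    by_cases hk : k ∈ S
    · simp [hk, (hX k hk).2]
    · simp [hk]
  calc euclNorm ((coordProj S * A * coordProj Sᶜ) *ᵥ x)
      ≤ euclNorm (A *ᵥ coordProj Sᶜ *ᵥ x) := by
        rw [← mulVec_mulVec, ← mulVec_mulVec]
        exact euclNorm_coordProj_mulVec_le _ _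
    _ = euclNorm (∫ ω, A *ᵥ S.piecewise (X ω) x ∂μ) := by rw [← hmean, mulVec_integral A hY]
    _ ≤ _ := euclNorm_integral_le _

theorem sup'_coordProj_mul_mul_coordProj_compl_le_integral
    (hX : ∀ i ∈ S, Integrable (fun ω => X ω i) μ ∧ ∫ ω, X ω i ∂μ = 0)
    (𝓐 : Finset (Matrix (Fin n) (Fin n) ℝ)) (h𝓐 : 𝓐.Nonempty) (x : Fin n → ℝ)
    (hint : Integrable (fun ω => 𝓐.sup' h𝓐 fun A => euclNorm (A *ᵥ S.piecewise (X ω) x)) μ) :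
    𝓐.sup' h𝓐 (fun A => euclNorm ((coordProj S * A * coordProj Sᶜ) *ᵥ x)) ≤
      ∫ ω, 𝓐.sup' h𝓐 (fun A => euclNorm (A *ᵥ S.piecewise (X ω) x)) ∂μ :=
  sup'_le _ _ fun A hA => (euclNorm_coordProj_mul_mul_coordProj_compl_mulVec_le hX A x).trans <|
    integral_mono_of_nonneg (ae_of_all _ fun _ => euclNorm_nonneg _) hint <|
      ae_of_all _ fun ω => le_sup' (fun B => euclNorm (B *ᵥ S.piecewise (X ω) x)) hA

theorem integrable_and_integral_sup'_coordProj_mul_mul_coordProj_compl_le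
    (hXm : ∀ i, Measurable fun ω => X ω i) (hind : iIndepFun (fun i ω => X ω i) μ)
    (hX : ∀ i ∈ S, Integrable (fun ω => X ω i) μ ∧ ∫ ω, X ω i ∂μ = 0)
    (𝓐 : Finset (Matrix (Fin n) (Fin n) ℝ)) (h𝓐 : 𝓐.Nonempty)
    (hint : Integrable (fun ω => 𝓐.sup' h𝓐 fun A => euclNorm (A *ᵥ X ω)) μ) :
    Integrable (fun ω => 𝓐.sup' h𝓐 fun A => euclNorm ((coordProj S * A * coordProj Sᶜ) *ᵥ X ω)) μ ∧
      ∫ ω, 𝓐.sup' h𝓐 (fun A => euclNorm ((coordProj S * A * coordProj Sᶜ) *ᵥ X ω)) ∂μ ≤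
        ∫ ω, 𝓐.sup' h𝓐 (fun A => euclNorm (A *ᵥ X ω)) ∂μ := by
  set F : (Fin n → ℝ) → ℝ := fun y => 𝓐.sup' h𝓐 fun A => euclNorm (A *ᵥ y)
  have hZ := (identDistrib_piecewise_prod hXm hind S).comp
    (continuous_sup'_euclNorm_mulVec 𝓐 h𝓐 id).measurable
  have hFZ : Integrable (fun p : Ω × Ω => F (S.piecewise (X p.2) (X p.1))) (μ.prod μ) :=
    hZ.integrable_iff.2 hint
  set H : Ω → ℝ := fun ω => ∫ ω', F (S.piecewise (X ω') (X ω)) ∂μ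
  have hbound : ∀ᵐ ω ∂μ, 𝓐.sup' h𝓐 (fun A => euclNorm ((coordProj S * A * coordProj Sᶜ) *ᵥ X ω))
      ≤ H ω := by
    filter_upwards [hFZ.prod_right_ae] with ω hω
    exact sup'_coordProj_mul_mul_coordProj_compl_le_integral hX 𝓐 h𝓐 (X ω) hω
  have hG : Integrable (fun ω => 𝓐.sup' h𝓐 fun A =>
      euclNorm ((coordProj S * A * coordProj Sᶜ) *ᵥ X ω)) μ := by
    refine hFZ.integral_prod_left.mono' ?_ ?_
    · exact (continuous_sup'_euclNorm_mulVec 𝓐 h𝓐 _).comp_aestronglyMeasurable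
        (measurable_pi_lambda _ hXm).aestronglyMeasurable
    · filter_upwards [hbound] with ω hω
      rwa [Real.norm_of_nonneg (sup'_euclNorm_nonneg _ _ _)]
  refine ⟨hG, (integral_mono_ae hG hFZ.integral_prod_left hbound).trans_eq ?_⟩
  rw [← integral_prod _ hFZ]
  exact hZ.integral_eq

end Comparison

theorem sup'_euclNorm_diagonal_mulVec_le {n : ℕ} (𝓐 : Finset (Matrix (Fin n) (Fin n) ℝ))
    (h𝓐 : 𝓐.Nonempty) (x : Fin n → ℝ) :
    𝓐.sup' h𝓐 (fun A => euclNorm (diagonal (fun i => A i i) *ᵥ x)) ≤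
      𝓐.sup' h𝓐 (fun A => euclNorm (A *ᵥ x)) + (4 / 2 ^ n : ℝ) * ∑ S : Finset (Fin n),
        𝓐.sup' h𝓐 (fun A => euclNorm ((coordProj S * A * coordProj Sᶜ) *ᵥ x)) :=
  sup'_le _ _ fun A hA => (euclNorm_diagonal_mulVec_le A x).trans <| by
    gcongr with S
    · exact le_sup' (fun B => euclNorm (B *ᵥ x)) hA
    · exact le_sup' (fun B => euclNorm ((coordProj S * B * coordProj Sᶜ) *ᵥ x)) hA

/-- Lemma: for `X` with independent mean-zero components and a finite set `𝓐` of
matrices, `E sup_{A∈𝓐} ‖Diag(A) X‖ ≤ C E sup_{A∈𝓐} ‖A X‖` for an absolute `C > 0`. -/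
theorem diag_compare :
    ∃ C : ℝ, 0 < C ∧
      ∀ (n : ℕ) (Ω : Type) (_ : MeasurableSpace Ω) (μ : Measure Ω),
        IsProbabilityMeasure μ →
      ∀ (X : Ω → Fin n → ℝ),
        (∀ i, Measurable fun ω => X ω i) →
        iIndepFun (fun i ω => X ω i) μ →
        (∀ i, Integrable (fun ω => X ω i) μ ∧ ∫ ω, X ω i ∂μ = 0) →
      ∀ (𝓐 : Finset (Matrix (Fin n) (Fin n) ℝ)) (h𝓐 : 𝓐.Nonempty),
        Integrable (fun ω =>
          𝓐.sup' h𝓐 fun A => euclNorm ((Matrix.diagonal fun i => A i i).mulVec (X ω))) μ →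
        Integrable (fun ω => 𝓐.sup' h𝓐 fun A => euclNorm (A.mulVec (X ω))) μ →
        ∫ ω, 𝓐.sup' h𝓐 (fun A =>
            euclNorm ((Matrix.diagonal fun i => A i i).mulVec (X ω))) ∂μ ≤
          C * ∫ ω, 𝓐.sup' h𝓐 (fun A => euclNorm (A.mulVec (X ω))) ∂μ := by
  refine ⟨5, by norm_num, fun n Ω _ μ _ X hXm hind hX 𝓐 h𝓐 _ hint => ?_⟩
  set E := ∫ ω, 𝓐.sup' h𝓐 (fun A => euclNorm (A *ᵥ X ω)) ∂μ
  set G : Finset (Fin n) → Ω → ℝ :=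
    fun S ω => 𝓐.sup' h𝓐 fun A => euclNorm ((coordProj S * A * coordProj Sᶜ) *ᵥ X ω)
  have hG (S : Finset (Fin n)) : Integrable (G S) μ ∧ ∫ ω, G S ω ∂μ ≤ E :=
    integrable_and_integral_sup'_coordProj_mul_mul_coordProj_compl_le hXm hind
      (fun i _ => hX i) 𝓐 h𝓐 hint
  have hsum : Integrable (fun ω => ∑ S, G S ω) μ := integrable_finsetSum _ fun S _ => (hG S).1
  calc ∫ ω, 𝓐.sup' h𝓐 (fun A => euclNorm (diagonal (fun i => A i i) *ᵥ X ω)) ∂μ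
      ≤ ∫ ω, (𝓐.sup' h𝓐 (fun A => euclNorm (A *ᵥ X ω)) + 4 / 2 ^ n * ∑ S, G S ω) ∂μ :=
        integral_mono_of_nonneg (ae_of_all _ fun _ => sup'_euclNorm_nonneg _ _ _)
          (hint.add (hsum.const_mul _)) (ae_of_all _ fun ω => sup'_euclNorm_diagonal_mulVec_le ..)
    _ = E + 4 / 2 ^ n * ∑ S, ∫ ω, G S ω ∂μ := by
        rw [integral_add hint (hsum.const_mul _), integral_const_mul,
          integral_finsetSum _ fun S _ => (hG S).1]
    _ ≤ E + 4 / 2 ^ n * ∑ _S : Finset (Fin n), E := by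
        gcongr with S
        exact (hG S).2
    _ = 5 * E := by
        rw [sum_const, card_univ, Fintype.card_finset, Fintype.card_fin, nsmul_eq_mul]
        push_cast
        field_simp
        ring
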